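/- Let Λ be a k-graph with a pseudo free self-similar action of a group G. Then for all g, g' ∈ G and μ, ν, μ', ν' ∈ Λ with s(μ) = g·s(ν) and s(μ') = g'·s(ν'), the intersection of basic sets satisfies Z(μ,g,ν) ∩ Z(μ',g',ν') = ⋃_{(α,α') ∈ F} Z(μ(g·α), g|_α, να), where F := {(α,α') ∈ Λ^min(ν,ν') : (g·α, g'·α') ∈ Λ^min(μ,μ') and g|_α = g'|_{α'}}. In particular, B_{G,Λ} is a base for a topology on G_{G,Λ}. -/

import Mathlib

namespace SSKG

/-- `ℕ^k`. -/
abbrev NK (k : ℕ) := Fin k → ℕ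
/-- `ℤ^k`. -/
abbrev ZK (k : ℕ) := Fin k → ℤ

lemma le0 {k : ℕ} (p : NK k) : 0 ≤ p := Pi.le_def.mpr fun i => Nat.zero_le (p i)

/-- A (row-finite, source-free, countable) `k`-graph: a countable small category with a
degree functor `d` into `ℕ^k` satisfying the unique factorization property. -/
structure KGraph (k : ℕ) where
  Obj : Type
  Mor : Type
  countable_mor : Countable Mor
  r : Mor → Obj
  s : Mor → Obj
  d : Mor → NK k
  ofObj : Obj → Mor
  comp : (μ ν : Mor) → s μ = r ν → Mor
  r_ofObj : ∀ v, r (ofObj v) = v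
  s_ofObj : ∀ v, s (ofObj v) = v
  d_ofObj : ∀ v, d (ofObj v) = 0
  eq_ofObj_of_d_eq_zero : ∀ μ, d μ = 0 → ∃ v, μ = ofObj v
  r_comp : ∀ μ ν h, r (comp μ ν h) = r μ
  s_comp : ∀ μ ν h, s (comp μ ν h) = s ν
  d_comp : ∀ μ ν h, d (comp μ ν h) = d μ + d ν
  comp_ofObj : ∀ μ (h : s μ = r (ofObj (s μ))), comp μ (ofObj (s μ)) h = μ
  ofObj_comp : ∀ μ (h : s (ofObj (r μ)) = r μ), comp (ofObj (r μ)) μ h = μ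
  comp_assoc : ∀ μ ν ρ (h₁ : s μ = r ν) (h₂ : s ν = r ρ),
      comp (comp μ ν h₁) ρ ((s_comp μ ν h₁).trans h₂)
        = comp μ (comp ν ρ h₂) (h₁.trans (r_comp ν ρ h₂).symm)
  factor_exists : ∀ μ (n m : NK k), d μ = n + m →
      ∃ (α β : Mor) (h : s α = r β), d α = n ∧ d β = m ∧ comp α β h = μ
  factor_unique : ∀ (α β α' β' : Mor) (h : s α = r β) (h' : s α' = r β'),
      d α = d α' → comp α β h = comp α' β' h' → α = α' ∧ β = β'
  row_finite : ∀ (v : Obj) (n : NK k), {μ : Mor | r μ = v ∧ d μ = n}.Finite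
  no_sources : ∀ (v : Obj) (n : NK k), ∃ μ : Mor, r μ = v ∧ d μ = n

lemma KGraph.comp_congr {k : ℕ} (Λ : KGraph k) {μ ν ν' : Λ.Mor} (hν : ν = ν')
    (h : Λ.s μ = Λ.r ν) (h' : Λ.s μ = Λ.r ν') : Λ.comp μ ν h = Λ.comp μ ν' h' := by
  cases hν; rfl

/-- An edge: a morphism of degree `e_i` for some `i`. -/
def IsEdge {k : ℕ} (Λ : KGraph k) (μ : Λ.Mor) : Prop := ∃ i : Fin k, Λ.d μ = Pi.single i 1

/-- Membership in `Λ⁰ ∪ Λᵉ` (a vertex or an edge). -/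
def VorE {k : ℕ} (Λ : KGraph k) (μ : Λ.Mor) : Prop := Λ.d μ = 0 ∨ IsEdge Λ μ

/-- A self-similar action of a group `G` on a `k`-graph `Λ`: an action by degree-,
range- and source-preserving automorphisms, together with a restriction map
`(g, μ) ↦ g|_μ` satisfying the Exel–Pardo style axioms. -/
structure SelfSimilar (k : ℕ) (G : Type) [Group G] (Λ : KGraph k) where
  act : G → Λ.Mor → Λ.Mor
  res : G → Λ.Mor → G
  act_one : ∀ μ, act 1 μ = μ
  act_mul : ∀ g h μ, act (g * h) μ = act g (act h μ)
  act_d : ∀ g μ, Λ.d (act g μ) = Λ.d μ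
  act_ofObj_r : ∀ g μ, act g (Λ.ofObj (Λ.r μ)) = Λ.ofObj (Λ.r (act g μ))
  act_ofObj_s : ∀ g μ, act g (Λ.ofObj (Λ.s μ)) = Λ.ofObj (Λ.s (act g μ))
  compat : ∀ g μ ν (h : Λ.s μ = Λ.r ν), Λ.s (act g μ) = Λ.r (act (res g μ) ν)
  act_comp : ∀ g μ ν (h : Λ.s μ = Λ.r ν),
      act g (Λ.comp μ ν h) = Λ.comp (act g μ) (act (res g μ) ν) (compat g μ ν h)
  res_ofObj : ∀ g v, res g (Λ.ofObj v) = g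
  res_comp : ∀ g μ ν (h : Λ.s μ = Λ.r ν), res g (Λ.comp μ ν h) = res (res g μ) ν
  res_one : ∀ μ, res 1 μ = 1
  res_mul : ∀ g h μ, res (g * h) μ = res g (act h μ) * res h μ

variable {k : ℕ} {G : Type} [Group G] {Λ : KGraph k}

/-- The induced action of `G` on the vertices `Λ⁰`. -/
def SelfSimilar.actV (S : SelfSimilar k G Λ) (g : G) (v : Λ.Obj) : Λ.Obj :=
  Λ.s (S.act g (Λ.ofObj v))

/-- The action is pseudo free. -/
def SelfSimilar.PseudoFree (S : SelfSimilar k G Λ) : Prop :=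
  ∀ (g : G) (μ : Λ.Mor), S.act g μ = μ → S.res g μ = 1 → g = 1

/-- An infinite path in `Λ`: a degree-preserving functor `Ω_k → Λ`, recorded through
its segments `x(p,q)` for `p ≤ q`. -/
structure InfPath {k : ℕ} (Λ : KGraph k) where
  seg : ∀ p q : NK k, p ≤ q → Λ.Mor
  d_seg : ∀ p q (h : p ≤ q), Λ.d (seg p q h) = fun i => q i - p i
  src_seg : ∀ p q m (h₁ : p ≤ q) (h₂ : q ≤ m), Λ.s (seg p q h₁) = Λ.r (seg q m h₂)
  comp_seg : ∀ p q m (h₁ : p ≤ q) (h₂ : q ≤ m),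
      Λ.comp (seg p q h₁) (seg q m h₂) (src_seg p q m h₁ h₂) = seg p m (h₁.trans h₂)

lemma InfPath.ext' {x y : InfPath Λ} (h : x.seg = y.seg) : x = y := by
  cases x; cases y; cases h; rfl

/-- The shift `σ^p(x)`. -/
def InfPath.shift (x : InfPath Λ) (p : NK k) : InfPath Λ where
  seg m n h := x.seg (m + p) (n + p) (add_le_add_left h p)
  d_seg m n h := by
    rw [x.d_seg]; funext i; simp only [Pi.add_apply]; omega
  src_seg m n l h₁ h₂ := x.src_seg _ _ _ _ _
  comp_seg m n l h₁ h₂ := x.comp_seg _ _ _ _ _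

/-- The action of `G` on infinite paths: `(g·x)(p,q) = g|_{x(0,p)} · x(p,q)`. -/
def SelfSimilar.actInf (S : SelfSimilar k G Λ) (g : G) (x : InfPath Λ) : InfPath Λ where
  seg p q h := S.act (S.res g (x.seg 0 p (le0 p))) (x.seg p q h)
  d_seg p q h := by rw [S.act_d, x.d_seg]
  src_seg p q m h₁ h₂ := by
    have key : S.res g (x.seg 0 q (le0 q))
        = S.res (S.res g (x.seg 0 p (le0 p))) (x.seg p q h₁) := by
      rw [← S.res_comp g (x.seg 0 p (le0 p)) (x.seg p q h₁) (x.src_seg 0 p q (le0 p) h₁),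
        x.comp_seg 0 p q (le0 p) h₁]
    beta_reduce
    rw [key]
    exact S.compat _ _ _ (x.src_seg p q m h₁ h₂)
  comp_seg p q m h₁ h₂ := by
    have key : S.res g (x.seg 0 q (le0 q))
        = S.res (S.res g (x.seg 0 p (le0 p))) (x.seg p q h₁) := by
      rw [← S.res_comp g (x.seg 0 p (le0 p)) (x.seg p q h₁) (x.src_seg 0 p q (le0 p) h₁),
        x.comp_seg 0 p q (le0 p) h₁]
    beta_reduce
    rw [← x.comp_seg p q m h₁ h₂, S.act_comp]
    exact Λ.comp_congr (by rw [key]) _ _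

/-- The restriction cocycle `g|_x : ℕ^k → G`, `g|_x(p) = g|_{x(0,p)}`. -/
def SelfSimilar.resInf (S : SelfSimilar k G Λ) (g : G) (x : InfPath Λ) : NK k → G :=
  fun p => S.res g (x.seg 0 p (le0 p))

/-- `IsConcat μ x y` says that `y = μx`, the concatenation of the finite path `μ`
(with `x(0,0) = s(μ)`) and the infinite path `x`. -/
def IsConcat (Λ : KGraph k) (μ : Λ.Mor) (x y : InfPath Λ) : Prop :=
  x.seg 0 0 le_rfl = Λ.ofObj (Λ.s μ) ∧
  y.seg 0 (Λ.d μ) (le0 _) = μ ∧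
  ∀ m n (h : m ≤ n), y.seg (Λ.d μ + m) (Λ.d μ + n) (add_le_add_right h _) = x.seg m n h

/-- The cylinder set `Z(μ)`. -/
def cylinder (Λ : KGraph k) (μ : Λ.Mor) : Set (InfPath Λ) :=
  {x : InfPath Λ | x.seg 0 (Λ.d μ) (le0 _) = μ}

/-- The cylinder-set topology on `Λ^∞`. -/
instance instTopInfPath (Λ : KGraph k) : TopologicalSpace (InfPath Λ) :=
  TopologicalSpace.generateFrom {U | ∃ μ : Λ.Mor, U = cylinder Λ μ}

/-- `Λ` is `G`-cofinal. -/
def GCofinal (S : SelfSimilar k G Λ) : Prop :=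
  ∀ (x : InfPath Λ) (v : Λ.Obj), ∃ (p : NK k) (μ : Λ.Mor) (g : G),
    Λ.ofObj (Λ.s μ) = x.seg p p le_rfl ∧ Λ.r μ = S.actV g v

/-- `Λ` is `G`-aperiodic. -/
def GAperiodic (S : SelfSimilar k G Λ) : Prop :=
  ∀ v : Λ.Obj, ∃ x : InfPath Λ, x.seg 0 0 le_rfl = Λ.ofObj v ∧
    ∀ (g : G) (p q : NK k), g ≠ 1 ∨ p ≠ q → x.shift p ≠ S.actInf g (x.shift q)

/-- A subset `U ⊆ Λ^∞` is invariant for the self-similar action. -/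
def InvariantSet (S : SelfSimilar k G Λ) (U : Set (InfPath Λ)) : Prop :=
  ∀ (g : G) (μ ν : Λ.Mor) (x z y : InfPath Λ),
    Λ.s μ = S.actV g (Λ.s ν) → IsConcat Λ ν x z → IsConcat Λ μ (S.actInf g x) y →
    z ∈ U → y ∈ U

/-- The minimal common extensions `Λ^min(μ,ν)`. -/
def Lmin (Λ : KGraph k) (μ ν : Λ.Mor) : Set (Λ.Mor × Λ.Mor) :=
  {p | ∃ (h₁ : Λ.s μ = Λ.r p.1) (h₂ : Λ.s ν = Λ.r p.2),
      Λ.comp μ p.1 h₁ = Λ.comp ν p.2 h₂ ∧ Λ.d (Λ.comp μ p.1 h₁) = Λ.d μ ⊔ Λ.d ν}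

/-- The group `C(ℕ^k, G)` of all functions `ℕ^k → G` under pointwise multiplication. -/
abbrev CkG (k : ℕ) (G : Type) [Group G] := NK k → G

/-- The normal subgroup of eventually trivial functions. -/
def tailTrivial (k : ℕ) (G : Type) [Group G] : Subgroup (CkG k G) where
  carrier := {f | ∃ z : NK k, ∀ p, z ≤ p → f p = 1}
  one_mem' := ⟨0, fun _ _ => rfl⟩
  mul_mem' := by
    rintro f g ⟨z₁, h₁⟩ ⟨z₂, h₂⟩
    exact ⟨z₁ ⊔ z₂, fun p hp => by
      rw [Pi.mul_apply, h₁ p (le_trans le_sup_left hp), h₂ p (le_trans le_sup_right hp),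
        one_mul]⟩
  inv_mem' := by
    rintro f ⟨z, h⟩
    exact ⟨z, fun p hp => by rw [Pi.inv_apply, h p hp, inv_one]⟩

instance tailTrivialNormal (k : ℕ) (G : Type) [Group G] : (tailTrivial k G).Normal := by
  constructor
  rintro f ⟨z, hz⟩ g
  exact ⟨z, fun p hp => by
    simp only [Pi.mul_apply, Pi.inv_apply, hz p hp, mul_one, mul_inv_cancel]⟩

/-- The quotient group `Q(ℕ^k, G) = C(ℕ^k,G)/∼`. -/
abbrev QkG (k : ℕ) (G : Type) [Group G] := CkG k G ⧸ tailTrivial k G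

/-- Coercion `ℕ^k → ℤ^k`. -/
def toZ {k : ℕ} (p : NK k) : ZK k := fun i => (p i : ℤ)

open scoped Classical in
/-- The translation `T_z` on functions `ℕ^k → G`, for `z ∈ ℤ^k`. -/
noncomputable def transFun {k : ℕ} {G : Type} [Group G] (z : ZK k) (f : CkG k G) : CkG k G :=
  fun p => if (∀ i, z i ≤ (p i : ℤ)) then f (fun i => ((p i : ℤ) - z i).toNat) else 1

/-- The ambient space `Λ^∞ × (Q(ℕ^k,G) ⋊ ℤ^k) × Λ^∞` containing the self-similar
path groupoid (as a set). -/
abbrev Triple (k : ℕ) (G : Type) [Group G] (Λ : KGraph k) :=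
  InfPath Λ × (QkG k G × ZK k) × InfPath Λ

/-- The basic set `Z(μ, g, ν)` of the self-similar path groupoid. -/
def Zset (S : SelfSimilar k G Λ) (μ : Λ.Mor) (g : G) (ν : Λ.Mor) : Set (Triple k G Λ) :=
  {t | ∃ x y z : InfPath Λ, IsConcat Λ ν x z ∧ IsConcat Λ μ (S.actInf g x) y ∧
    t = (y, ((QuotientGroup.mk (transFun (toZ (Λ.d μ)) (S.resInf g x)) : QkG k G),
      toZ (Λ.d μ) - toZ (Λ.d ν)), z)}

/-- The family `B_{G,Λ}` of basic sets. -/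
def BGL (S : SelfSimilar k G Λ) : Set (Set (Triple k G Λ)) :=
  {A | ∃ (μ ν : Λ.Mor) (g : G), Λ.s μ = S.actV g (Λ.s ν) ∧ A = Zset S μ g ν}

/-- The self-similar path groupoid `G_{G,Λ}` (as a set of triples). -/
def Gpd (S : SelfSimilar k G Λ) : Set (Triple k G Λ) :=
  {t | ∃ (g : G) (μ ν : Λ.Mor), Λ.s μ = S.actV g (Λ.s ν) ∧ t ∈ Zset S μ g ν}

/-- The topology on `G_{G,Λ}` generated by the basic sets. -/
def gpdTop (S : SelfSimilar k G Λ) : TopologicalSpace {t : Triple k G Λ // t ∈ Gpd S} :=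
  TopologicalSpace.generateFrom
    {A | ∃ (μ ν : Λ.Mor) (g : G), A = {t | (t : Triple k G Λ) ∈ Zset S μ g ν}}

/-!
A triple `(y, q, z)` lies in `Z(μ, g, ν)` exactly when `y ∈ Z(μ)`, `z ∈ Z(ν)` and
`g · σ^{d(ν)} z = σ^{d(μ)} y`, the middle coordinate `q` then being determined. Cutting `z` at
degree `d(ν) ∨ d(ν')` writes a point of `Z(μ, g, ν) ∩ Z(μ', g', ν')` as a point of both
`Z(μ (g·α), g|_α, να)` and `Z(μ' (g'·α'), g'|_α', ν'α')`; the two pairs of paths coincide, being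
initial segments of equal degree of the same infinite paths. The labels `g|_α` and `g'|_α'`
agree by pseudo freeness: equality of the `Q(ℕ^k, G)`-coordinates says that they have the same
restriction along a long segment of the source, on which they also act in the same way.
-/

lemma KGraph.comp_congr₂ {Λ : KGraph k} {μ μ' ν ν' : Λ.Mor} (hμ : μ = μ') (hν : ν = ν')
    (h : Λ.s μ = Λ.r ν) (h' : Λ.s μ' = Λ.r ν') : Λ.comp μ ν h = Λ.comp μ' ν' h' := by
  subst hμ hν; rfl

namespace InfPath

lemma seg_congr (x : InfPath Λ) {p q p' q' : NK k} (hp : p = p') (hq : q = q')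
    (h : p ≤ q) (h' : p' ≤ q') : x.seg p q h = x.seg p' q' h' := by
  subst hp hq; rfl

lemma d_seg_zero (x : InfPath Λ) (p : NK k) (h : 0 ≤ p) : Λ.d (x.seg 0 p h) = p := by
  rw [x.d_seg]; funext i; simp

lemma shift_seg_zero (x : InfPath Λ) (p q : NK k) :
    (x.shift p).seg 0 q (le0 q) = x.seg p (q + p) le_add_self :=
  x.seg_congr (zero_add p) rfl _ _

lemma r_shift_seg_zero (x : InfPath Λ) (p q : NK k) :
    Λ.r ((x.shift p).seg 0 q (le0 q)) = Λ.s (x.seg 0 p (le0 p)) := by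
  rw [shift_seg_zero, x.src_seg 0 p (q + p) (le0 p) le_add_self]

lemma seg_zero_add (x : InfPath Λ) (p q : NK k) :
    x.seg 0 (p + q) (le0 _) = Λ.comp (x.seg 0 p (le0 p)) ((x.shift p).seg 0 q (le0 q))
      (x.r_shift_seg_zero p q).symm := by
  rw [← x.comp_seg 0 p (p + q) (le0 p) le_self_add]
  exact Λ.comp_congr (by rw [shift_seg_zero]; exact x.seg_congr rfl (add_comm p q) _ _) _ _

lemma shift_shift (x : InfPath Λ) (p q : NK k) : (x.shift p).shift q = x.shift (p + q) := by
  apply ext'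
  funext m n h
  exact x.seg_congr (by abel) (by abel) _ _

lemma seg_zero_eq_of_le {x y : InfPath Λ} {n q : NK k}
    (h : x.seg 0 q (le0 q) = y.seg 0 q (le0 q)) (hnq : n ≤ q) :
    x.seg 0 n (le0 n) = y.seg 0 n (le0 n) := by
  refine (Λ.factor_unique _ _ _ _ (x.src_seg 0 n q (le0 n) hnq) (y.src_seg 0 n q (le0 n) hnq)
    (by rw [d_seg_zero, d_seg_zero]) ?_).1
  rw [x.comp_seg, y.comp_seg]; exact h

lemma ext_seg_zero {x y : InfPath Λ}
    (h : ∀ n : NK k, x.seg 0 n (le0 n) = y.seg 0 n (le0 n)) : x = y := by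
  apply ext'
  funext p q hpq
  refine (Λ.factor_unique _ _ _ _ (x.src_seg 0 p q (le0 p) hpq) (y.src_seg 0 p q (le0 p) hpq)
    (by rw [d_seg_zero, d_seg_zero]) ?_).2
  rw [x.comp_seg, y.comp_seg]; exact h q

lemma eq_of_seg_zero_of_shift {x y : InfPath Λ} {p : NK k}
    (hseg : x.seg 0 p (le0 p) = y.seg 0 p (le0 p)) (hshift : x.shift p = y.shift p) :
    x = y := by
  refine ext_seg_zero fun n => seg_zero_eq_of_le (q := p + n) ?_ le_add_self
  rw [seg_zero_add, seg_zero_add]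
  exact KGraph.comp_congr₂ hseg (by rw [hshift]) _ _

end InfPath

lemma InfPath.mem_cylinder_seg_zero (x : InfPath Λ) (p : NK k) :
    x ∈ cylinder Λ (x.seg 0 p (le0 p)) :=
  x.seg_congr rfl (x.d_seg_zero p _) _ _

lemma eq_of_mem_cylinder {x : InfPath Λ} {μ ν : Λ.Mor} (hμ : x ∈ cylinder Λ μ)
    (hν : x ∈ cylinder Λ ν) (hd : Λ.d μ = Λ.d ν) : μ = ν :=
  hμ.symm.trans ((x.seg_congr rfl hd _ _).trans hν)

lemma mem_cylinder_comp_iff {x : InfPath Λ} {μ β : Λ.Mor} (h : Λ.s μ = Λ.r β) :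
    x ∈ cylinder Λ (Λ.comp μ β h) ↔
      x ∈ cylinder Λ μ ∧ x.shift (Λ.d μ) ∈ cylinder Λ β := by
  simp only [cylinder, Set.mem_ofPred_eq]
  rw [x.seg_congr rfl (Λ.d_comp μ β h) _ (le0 _), x.seg_zero_add]
  constructor
  · intro hx
    exact Λ.factor_unique _ _ _ _ _ _ (x.d_seg_zero _ _) hx
  · rintro ⟨hμ, hβ⟩
    exact KGraph.comp_congr₂ hμ hβ _ _

lemma isConcat_iff {μ : Λ.Mor} {x y : InfPath Λ} :
    IsConcat Λ μ x y ↔ y ∈ cylinder Λ μ ∧ x = y.shift (Λ.d μ) := by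
  constructor
  · rintro ⟨-, hy, hxy⟩
    refine ⟨hy, InfPath.ext' ?_⟩
    funext m n h
    exact (hxy m n h).symm.trans (y.seg_congr (add_comm _ _) (add_comm _ _) _ _)
  · rintro ⟨hy, rfl⟩
    refine ⟨?_, hy, fun m n h => y.seg_congr (add_comm _ _) (add_comm _ _) _ _⟩
    obtain ⟨v, hv⟩ := Λ.eq_ofObj_of_d_eq_zero ((y.shift (Λ.d μ)).seg 0 0 le_rfl)
      (by rw [InfPath.d_seg_zero])
    have hr := y.r_shift_seg_zero (Λ.d μ) 0
    rw [hv, Λ.r_ofObj, hy] at hr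
    rw [hv, hr]

namespace SelfSimilar

lemma PseudoFree.eq_of_act_eq_of_res_eq {S : SelfSimilar k G Λ} (hpf : S.PseudoFree)
    {g h : G} {μ : Λ.Mor} (hact : S.act g μ = S.act h μ) (hres : S.res g μ = S.res h μ) :
    g = h := by
  refine (inv_mul_eq_one.mp (hpf (h⁻¹ * g) μ ?_ ?_)).symm
  · rw [S.act_mul, hact, ← S.act_mul, inv_mul_cancel, S.act_one]
  · rw [S.res_mul, hact, hres, ← S.res_mul, inv_mul_cancel, S.res_one]

variable (S : SelfSimilar k G Λ)

lemma r_act (g : G) (α : Λ.Mor) : Λ.r (S.act g α) = S.actV g (Λ.r α) := by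
  rw [actV, S.act_ofObj_r, Λ.s_ofObj]

lemma s_act (g : G) (α : Λ.Mor) : Λ.s (S.act g α) = S.actV (S.res g α) (Λ.s α) := by
  have h : Λ.s α = Λ.r (Λ.ofObj (Λ.s α)) := (Λ.r_ofObj _).symm
  conv_lhs => rw [← Λ.comp_ofObj α h, S.act_comp, Λ.s_comp]
  rfl

lemma res_seg_self (g : G) (x : InfPath Λ) (p : NK k) (h : p ≤ p) : S.res g (x.seg p p h) = g := by
  obtain ⟨v, hv⟩ := Λ.eq_ofObj_of_d_eq_zero (x.seg p p h) (by rw [x.d_seg]; funext i; simp)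
  rw [hv, S.res_ofObj]

lemma actInf_seg_zero (g : G) (x : InfPath Λ) (p : NK k) :
    (S.actInf g x).seg 0 p (le0 p) = S.act g (x.seg 0 p (le0 p)) := by
  simp only [actInf, res_seg_self]

lemma resInf_add (g : G) (x : InfPath Λ) (p q : NK k) :
    S.resInf g x (p + q) = S.resInf (S.res g (x.seg 0 p (le0 p))) (x.shift p) q := by
  simp only [resInf]
  rw [x.seg_zero_add, S.res_comp]

lemma actInf_shift (g : G) (x : InfPath Λ) (p : NK k) :
    (S.actInf g x).shift p = S.actInf (S.res g (x.seg 0 p (le0 p))) (x.shift p) := by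
  apply InfPath.ext'
  funext m n h
  show S.act (S.res g (x.seg 0 (m + p) _)) _ = S.act (S.resInf _ (x.shift p) m) _
  rw [← resInf_add, resInf, x.seg_congr rfl (add_comm m p) _ (le0 _)]
  rfl

/-- The cocycle identity `g · (α x) = (g · α) (g|_α · x)` for infinite paths. -/
lemma actInf_eq_iff {g : G} {α : Λ.Mor} {x : InfPath Λ} (hα : x ∈ cylinder Λ α)
    (w : InfPath Λ) :
    S.actInf g x = w ↔ w ∈ cylinder Λ (S.act g α) ∧
      S.actInf (S.res g α) (x.shift (Λ.d α)) = w.shift (Λ.d α) := by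
  have hw : w ∈ cylinder Λ (S.act g α) ↔ w.seg 0 (Λ.d α) (le0 _) = S.act g α :=
    ⟨fun h => (w.seg_congr rfl (S.act_d g α).symm _ _).trans h,
      fun h => (w.seg_congr rfl (S.act_d g α) _ _).trans h⟩
  have hgx : (S.actInf g x).seg 0 (Λ.d α) (le0 _) = S.act g α := by
    rw [actInf_seg_zero]; exact congrArg _ hα
  have hshift : (S.actInf g x).shift (Λ.d α) = S.actInf (S.res g α) (x.shift (Λ.d α)) := by
    rw [actInf_shift, hα]
  rw [hw, ← hshift]
  constructor
  · rintro rfl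
    exact ⟨hgx, rfl⟩
  · rintro ⟨hseg, hrest⟩
    exact InfPath.eq_of_seg_zero_of_shift (hgx.trans hseg.symm) hrest

end SelfSimilar

lemma toZ_add (p q : NK k) : toZ (p + q) = toZ p + toZ q := by
  funext i; simp [toZ]

lemma add_sup_tsub_eq_sup {a b a' b' : NK k} (h : toZ a - toZ b = toZ a' - toZ b') :
    a + (b ⊔ b' - b) = a ⊔ a' := by
  funext i
  have hi := congrFun h i
  simp only [toZ, Pi.sub_apply] at hi
  simp only [Pi.add_apply, Pi.sub_apply, Pi.sup_apply]
  omega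

lemma transFun_add_apply (z : NK k) (f : CkG k G) (p : NK k) :
    transFun (toZ z) f (p + z) = f p := by
  rw [transFun, if_pos fun i => by simp [toZ]]
  congr 1
  funext i
  simp [toZ]

lemma mk_eq_mk_of_eventually_eq {f₁ f₂ : CkG k G} (h : ∃ w : NK k, ∀ p, w ≤ p → f₁ p = f₂ p) :
    (QuotientGroup.mk f₁ : QkG k G) = QuotientGroup.mk f₂ := by
  obtain ⟨w, hw⟩ := h
  rw [QuotientGroup.eq]
  exact ⟨w, fun p hp => by simp [hw p hp]⟩

lemma eventually_eq_of_mk_transFun_eq {d : NK k} {f₁ f₂ : CkG k G}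
    (h : (QuotientGroup.mk (transFun (toZ d) f₁) : QkG k G) = QuotientGroup.mk (transFun (toZ d) f₂)) :
    ∃ w : NK k, ∀ p, w ≤ p → f₁ p = f₂ p := by
  rw [QuotientGroup.eq] at h
  obtain ⟨w, hw⟩ := h
  refine ⟨w, fun p hp => ?_⟩
  have hpd := hw (p + d) (hp.trans le_self_add)
  simp only [Pi.mul_apply, Pi.inv_apply, transFun_add_apply] at hpd
  exact inv_mul_eq_one.mp hpd

section Zset

variable (S : SelfSimilar k G Λ)

lemma mk_transFun_resInf_shift {g : G} {α : Λ.Mor} {x : InfPath Λ} (hα : x ∈ cylinder Λ α)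
    (d : NK k) :
    (QuotientGroup.mk (transFun (toZ (d + Λ.d α)) (S.resInf (S.res g α) (x.shift (Λ.d α)))) :
        QkG k G) = QuotientGroup.mk (transFun (toZ d) (S.resInf g x)) := by
  refine mk_eq_mk_of_eventually_eq ⟨d + Λ.d α, fun r hr => ?_⟩
  obtain ⟨q, rfl⟩ : ∃ q, r = q + (d + Λ.d α) := ⟨r - (d + Λ.d α), (tsub_add_cancel_of_le hr).symm⟩
  rw [transFun_add_apply, show q + (d + Λ.d α) = Λ.d α + q + d by abel, transFun_add_apply,
    S.resInf_add, show x.seg 0 (Λ.d α) (le0 _) = α from hα]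

lemma mem_Zset_iff {μ ν : Λ.Mor} {g : G} {y z : InfPath Λ} {q : QkG k G × ZK k} :
    (y, q, z) ∈ Zset S μ g ν ↔ z ∈ cylinder Λ ν ∧ y ∈ cylinder Λ μ ∧
      S.actInf g (z.shift (Λ.d ν)) = y.shift (Λ.d μ) ∧
      q = (QuotientGroup.mk (transFun (toZ (Λ.d μ)) (S.resInf g (z.shift (Λ.d ν)))),
        toZ (Λ.d μ) - toZ (Λ.d ν)) := by
  simp only [Zset, Set.mem_ofPred_eq, Prod.mk.injEq, isConcat_iff]
  constructor
  · rintro ⟨x, y, z, ⟨hz, rfl⟩, ⟨hy, hgx⟩, rfl, rfl, rfl⟩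
    exact ⟨hz, hy, hgx, rfl⟩
  · rintro ⟨hz, hy, hgx, rfl⟩
    exact ⟨_, y, z, ⟨hz, rfl⟩, ⟨hy, hgx⟩, rfl, rfl, rfl⟩

lemma mem_Zset_comp_iff {μ ν α : Λ.Mor} {g : G} (h₁ : Λ.s ν = Λ.r α)
    (hg : Λ.s μ = Λ.r (S.act g α)) {y z : InfPath Λ} {q : QkG k G × ZK k} :
    (y, q, z) ∈ Zset S (Λ.comp μ (S.act g α) hg) (S.res g α) (Λ.comp ν α h₁) ↔
      (y, q, z) ∈ Zset S μ g ν ∧ z ∈ cylinder Λ (Λ.comp ν α h₁) := by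
  have hdμ : Λ.d (Λ.comp μ (S.act g α) hg) = Λ.d μ + Λ.d α := by rw [Λ.d_comp, S.act_d]
  have hq : toZ (Λ.d μ + Λ.d α) - toZ (Λ.d ν + Λ.d α) = toZ (Λ.d μ) - toZ (Λ.d ν) := by
    rw [toZ_add, toZ_add, add_sub_add_right_eq_sub]
  simp only [mem_Zset_iff, mem_cylinder_comp_iff]
  rw [hdμ, Λ.d_comp, ← z.shift_shift, ← y.shift_shift]
  constructor
  · rintro ⟨⟨hν, hα⟩, ⟨hμ, hgα⟩, hact, rfl⟩
    exact ⟨⟨hν, hμ, (S.actInf_eq_iff hα _).2 ⟨hgα, hact⟩,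
      Prod.ext (mk_transFun_resInf_shift S hα _) hq⟩, hν, hα⟩
  · rintro ⟨⟨hν, hμ, hact, rfl⟩, -, hα⟩
    obtain ⟨hgα, hact'⟩ := (S.actInf_eq_iff hα _).1 hact
    exact ⟨⟨hν, hα⟩, ⟨hμ, hgα⟩, hact', Prod.ext (mk_transFun_resInf_shift S hα _).symm hq.symm⟩

lemma Zset_comp_subset {μ ν α : Λ.Mor} {g : G} (h₁ : Λ.s ν = Λ.r α)
    (hg : Λ.s μ = Λ.r (S.act g α)) :
    Zset S (Λ.comp μ (S.act g α) hg) (S.res g α) (Λ.comp ν α h₁) ⊆ Zset S μ g ν := by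
  rintro ⟨y, q, z⟩ ht
  exact ((mem_Zset_comp_iff S h₁ hg).1 ht).1

lemma exists_mem_Zset_comp {μ ν : Λ.Mor} {g : G} (hsv : Λ.s μ = S.actV g (Λ.s ν))
    {y z : InfPath Λ} {q : QkG k G × ZK k} (ht : (y, q, z) ∈ Zset S μ g ν) (p : NK k) :
    ∃ (α : Λ.Mor) (h₁ : Λ.s ν = Λ.r α) (hg : Λ.s μ = Λ.r (S.act g α)), Λ.d α = p ∧
      (y, q, z) ∈ Zset S (Λ.comp μ (S.act g α) hg) (S.res g α) (Λ.comp ν α h₁) := by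
  have hν := ((mem_Zset_iff S).1 ht).1
  have h₁ : Λ.s ν = Λ.r ((z.shift (Λ.d ν)).seg 0 p (le0 p)) := by
    rw [z.r_shift_seg_zero, hν]
  have hg : Λ.s μ = Λ.r (S.act g ((z.shift (Λ.d ν)).seg 0 p (le0 p))) := by
    rw [S.r_act, ← h₁, hsv]
  exact ⟨_, h₁, hg, InfPath.d_seg_zero _ _ _, (mem_Zset_comp_iff S h₁ hg).2
    ⟨ht, (mem_cylinder_comp_iff h₁).2 ⟨hν, InfPath.mem_cylinder_seg_zero _ _⟩⟩⟩

lemma res_eq_of_mem_Zset (hpf : S.PseudoFree) {β γ : Λ.Mor} {h h' : G} {t : Triple k G Λ}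
    (ht : t ∈ Zset S β h γ) (ht' : t ∈ Zset S β h' γ) : h = h' := by
  obtain ⟨y, q, z⟩ := t
  obtain ⟨-, -, hact, rfl⟩ := (mem_Zset_iff S).1 ht
  obtain ⟨-, -, hact', hq⟩ := (mem_Zset_iff S).1 ht'
  obtain ⟨w, hw⟩ := eventually_eq_of_mk_transFun_eq (congrArg Prod.fst hq)
  refine hpf.eq_of_act_eq_of_res_eq (μ := (z.shift (Λ.d γ)).seg 0 w (le0 w)) ?_ (hw w le_rfl)
  rw [← S.actInf_seg_zero, ← S.actInf_seg_zero, hact, hact']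

lemma Zset_inter_subset (hpf : S.PseudoFree) {g g' : G} {μ ν μ' ν' : Λ.Mor}
    (hsv : Λ.s μ = S.actV g (Λ.s ν)) (hsv' : Λ.s μ' = S.actV g' (Λ.s ν')) :
    Zset S μ g ν ∩ Zset S μ' g' ν' ⊆
      {t | ∃ (α α' : Λ.Mor) (h₁ : Λ.s ν = Λ.r α) (hg : Λ.s μ = Λ.r (S.act g α)),
        (α, α') ∈ Lmin Λ ν ν' ∧ (S.act g α, S.act g' α') ∈ Lmin Λ μ μ' ∧
        S.res g α = S.res g' α' ∧
        t ∈ Zset S (Λ.comp μ (S.act g α) hg) (S.res g α) (Λ.comp ν α h₁)} := by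
  rintro ⟨y, q, z⟩ ⟨ht, ht'⟩
  have hdeg : toZ (Λ.d μ) - toZ (Λ.d ν) = toZ (Λ.d μ') - toZ (Λ.d ν') :=
    (congrArg Prod.snd ((mem_Zset_iff S).1 ht).2.2.2).symm.trans
      (congrArg Prod.snd ((mem_Zset_iff S).1 ht').2.2.2)
  obtain ⟨α, h₁, hg, hdα, hmem⟩ := exists_mem_Zset_comp S hsv ht (Λ.d ν ⊔ Λ.d ν' - Λ.d ν)
  obtain ⟨α', h₁', hg', hdα', hmem'⟩ :=
    exists_mem_Zset_comp S hsv' ht' (Λ.d ν ⊔ Λ.d ν' - Λ.d ν')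
  have hdν : Λ.d (Λ.comp ν α h₁) = Λ.d ν ⊔ Λ.d ν' := by
    rw [Λ.d_comp, hdα, add_tsub_cancel_of_le le_sup_left]
  have hdν' : Λ.d (Λ.comp ν' α' h₁') = Λ.d ν ⊔ Λ.d ν' := by
    rw [Λ.d_comp, hdα', add_tsub_cancel_of_le le_sup_right]
  have hdμ : Λ.d (Λ.comp μ (S.act g α) hg) = Λ.d μ ⊔ Λ.d μ' := by
    rw [Λ.d_comp, S.act_d, hdα, add_sup_tsub_eq_sup hdeg]
  have hdμ' : Λ.d (Λ.comp μ' (S.act g' α') hg') = Λ.d μ ⊔ Λ.d μ' := by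
    rw [Λ.d_comp, S.act_d, hdα', sup_comm (Λ.d ν), add_sup_tsub_eq_sup hdeg.symm, sup_comm]
  obtain ⟨hz, hy, -⟩ := (mem_Zset_iff S).1 hmem
  obtain ⟨hz', hy', -⟩ := (mem_Zset_iff S).1 hmem'
  have hν := eq_of_mem_cylinder hz hz' (hdν.trans hdν'.symm)
  have hμ := eq_of_mem_cylinder hy hy' (hdμ.trans hdμ'.symm)
  refine ⟨α, α', h₁, hg, ⟨h₁, h₁', hν, hdν⟩, ⟨hg, hg', hμ, hdμ⟩, ?_, hmem⟩
  rw [← hμ, ← hν] at hmem'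
  exact res_eq_of_mem_Zset S hpf hmem hmem'

lemma Zset_comp_subset_inter {g g' : G} {μ ν μ' ν' α α' : Λ.Mor} (h₁ : Λ.s ν = Λ.r α)
    (hg : Λ.s μ = Λ.r (S.act g α)) (hν : (α, α') ∈ Lmin Λ ν ν')
    (hμ : (S.act g α, S.act g' α') ∈ Lmin Λ μ μ') (hres : S.res g α = S.res g' α') :
    Zset S (Λ.comp μ (S.act g α) hg) (S.res g α) (Λ.comp ν α h₁) ⊆
      Zset S μ g ν ∩ Zset S μ' g' ν' := by
  obtain ⟨_, h₁' : Λ.s ν' = Λ.r α', hcν, _⟩ := hν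
  obtain ⟨_, hg' : Λ.s μ' = Λ.r (S.act g' α'), hcμ, _⟩ := hμ
  refine fun t ht => ⟨Zset_comp_subset S h₁ hg ht, Zset_comp_subset S h₁' hg' ?_⟩
  rwa [← hcν, ← hcμ, ← hres]

end Zset

theorem stmt12_general {k : ℕ} (G : Type) [Group G]
    (Λ : KGraph k) (S : SelfSimilar k G Λ) (hpf : S.PseudoFree) :
    (∀ (g g' : G) (μ ν μ' ν' : Λ.Mor),
      Λ.s μ = S.actV g (Λ.s ν) → Λ.s μ' = S.actV g' (Λ.s ν') →
      Zset S μ g ν ∩ Zset S μ' g' ν' =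
        {t | ∃ (α α' : Λ.Mor) (h₁ : Λ.s ν = Λ.r α) (hg : Λ.s μ = Λ.r (S.act g α)),
          (α, α') ∈ Lmin Λ ν ν' ∧ (S.act g α, S.act g' α') ∈ Lmin Λ μ μ' ∧
          S.res g α = S.res g' α' ∧
          t ∈ Zset S (Λ.comp μ (S.act g α) hg) (S.res g α) (Λ.comp ν α h₁)}) ∧
    (∀ Z₁ ∈ BGL S, ∀ Z₂ ∈ BGL S, ∀ t ∈ Z₁ ∩ Z₂, ∃ Z₃ ∈ BGL S, t ∈ Z₃ ∧ Z₃ ⊆ Z₁ ∩ Z₂) := by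
  refine ⟨fun g g' μ ν μ' ν' hsv hsv' => (Zset_inter_subset S hpf hsv hsv').antisymm ?_, ?_⟩
  · rintro t ⟨α, α', h₁, hg, hν, hμ, hres, ht⟩
    exact Zset_comp_subset_inter S h₁ hg hν hμ hres ht
  · rintro _ ⟨μ, ν, g, hsv, rfl⟩ _ ⟨μ', ν', g', hsv', rfl⟩ t ht
    obtain ⟨α, α', h₁, hg, hν, hμ, hres, hmem⟩ := Zset_inter_subset S hpf hsv hsv' ht
    refine ⟨_, ⟨_, _, S.res g α, ?_, rfl⟩, hmem, Zset_comp_subset_inter S h₁ hg hν hμ hres⟩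
    rw [Λ.s_comp, Λ.s_comp, S.s_act]

/-- for a pseudo free action, the intersection of two basic sets of the
self-similar path groupoid is the displayed union of basic sets; in particular, the
family `B_{G,Λ}` is a base for a topology on `G_{G,Λ}`. -/
theorem stmt12 {k : ℕ} (hk : 0 < k) (G : Type) [Group G] [Countable G]
    (Λ : KGraph k) (S : SelfSimilar k G Λ) (hpf : S.PseudoFree) :
    (∀ (g g' : G) (μ ν μ' ν' : Λ.Mor),
      Λ.s μ = S.actV g (Λ.s ν) → Λ.s μ' = S.actV g' (Λ.s ν') →
      Zset S μ g ν ∩ Zset S μ' g' ν' =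
        {t | ∃ (α α' : Λ.Mor) (h₁ : Λ.s ν = Λ.r α) (hg : Λ.s μ = Λ.r (S.act g α)),
          (α, α') ∈ Lmin Λ ν ν' ∧ (S.act g α, S.act g' α') ∈ Lmin Λ μ μ' ∧
          S.res g α = S.res g' α' ∧
          t ∈ Zset S (Λ.comp μ (S.act g α) hg) (S.res g α) (Λ.comp ν α h₁)}) ∧
    (∀ Z₁ ∈ BGL S, ∀ Z₂ ∈ BGL S, ∀ t ∈ Z₁ ∩ Z₂, ∃ Z₃ ∈ BGL S, t ∈ Z₃ ∧ Z₃ ⊆ Z₁ ∩ Z₂) :=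
  stmt12_general G Λ S hpf

end SSKG
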